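/- Let λₙ = 1/(π²n²) and let γₙ± = λₙ · (-(β₁²+β₂²) ± sqrt((β₁²-β₂²)² + 4a²β₁²β₂²))/2 for β₁,β₂ ≥ 0 and |a| ≤ 1. Then the infinite product ∏ₙ≥₁ (1-γₙ⁺)(1-γₙ⁻) converges and equals (sinh c⁺/c⁺)·(sinh c⁻/c⁻), where c± = sqrt(((β₁²+β₂²) ± sqrt((β₁²-β₂²)² + 4a²β₁²β₂²))/2). -/

import Mathlib

/-!
Euler's sine product at `x i` gives `sinh (π x) = π x ∏ₙ (1 + x² / n²)`, i.e.
`∏ₙ (1 + c² λₙ) = sinh c / c`. For `|a| ≤ 1` we have `D ≤ β₁² + β₂²`, so both radicands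
`(β₁² + β₂² ± D) / 2` are nonnegative, `1 - γₙ^± = 1 + λₙ c∓²`, and the product splits into two
such sinh products.
-/

/-- `sinh c / c`, extended by its limiting value `1` at `c = 0`. -/
noncomputable def sinhRatio (c : ℝ) : ℝ := if c = 0 then 1 else Real.sinh c / c

open Filter Finset Topology Real

theorem Real.tendsto_euler_sinh_prod (x : ℝ) :
    Tendsto (fun n : ℕ => π * x * ∏ j ∈ range n, ((1 : ℝ) + x ^ 2 / ((j : ℝ) + 1) ^ 2))
      atTop (𝓝 <| sinh (π * x)) := by
  have hprod : ∀ n : ℕ, (π : ℂ) * (x * Complex.I) *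
      ∏ j ∈ range n, ((1 : ℂ) - (x * Complex.I) ^ 2 / ((j : ℂ) + 1) ^ 2) =
      ((π * x * ∏ j ∈ range n, ((1 : ℝ) + x ^ 2 / ((j : ℝ) + 1) ^ 2) : ℝ) : ℂ) * Complex.I := by
    intro n
    push_cast
    simp only [mul_pow, Complex.I_sq, mul_neg_one, neg_div, sub_neg_eq_add]
    ring
  have hsin : Complex.sin (π * (x * Complex.I)) = (sinh (π * x) : ℂ) * Complex.I := by
    rw [← mul_assoc, ← Complex.ofReal_mul, Complex.sin_mul_I, Complex.ofReal_sinh]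
  have h := (Complex.continuous_im.tendsto _).comp (Complex.tendsto_euler_sin_prod (x * Complex.I))
  simpa only [Function.comp_def, hprod, hsin, Complex.mul_I_im, Complex.ofReal_re] using h

theorem Real.summable_one_div_nat_add_one_sq :
    Summable (fun n : ℕ => 1 / ((n : ℝ) + 1) ^ 2) := by
  exact_mod_cast (summable_nat_add_iff 1).2 (Real.summable_one_div_nat_pow.2 one_lt_two)

theorem hasProd_one_add_sq_div_pi_sq_mul_sq (c : ℝ) :
    HasProd (fun n : ℕ => 1 + c ^ 2 / (π ^ 2 * ((n : ℝ) + 1) ^ 2)) (sinhRatio c) := by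
  rcases eq_or_ne c 0 with rfl | hc
  · simp [sinhRatio, hasProd_one]
  have hmult : Multipliable (fun n : ℕ => 1 + c ^ 2 / (π ^ 2 * ((n : ℝ) + 1) ^ 2)) := by
    refine Real.multipliable_one_add_of_summable ?_
    refine (Real.summable_one_div_nat_add_one_sq.mul_left (c ^ 2 / π ^ 2)).congr fun n => ?_
    rw [div_mul_div_comm, mul_one]
  rw [sinhRatio, if_neg hc, hmult.hasProd_iff_tendsto_nat]
  have h := (Real.tendsto_euler_sinh_prod (c / π)).div_const c
  rw [mul_div_cancel₀ c pi_ne_zero] at h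
  refine h.congr fun n => ?_
  rw [mul_div_cancel_left₀ _ hc]
  refine prod_congr rfl fun j _ => ?_
  rw [div_pow, div_div]

theorem sqrt_discriminant_le_sum_sq (β₁ β₂ a : ℝ) (ha : |a| ≤ 1) :
    √((β₁ ^ 2 - β₂ ^ 2) ^ 2 + 4 * a ^ 2 * β₁ ^ 2 * β₂ ^ 2) ≤ β₁ ^ 2 + β₂ ^ 2 := by
  have ha2 : a ^ 2 ≤ 1 := by simpa using sq_le_sq' (abs_le.1 ha).1 (abs_le.1 ha).2
  rw [Real.sqrt_le_iff]
  refine ⟨by positivity, ?_⟩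
  nlinarith [mul_nonneg (sq_nonneg (β₁ * β₂)) (sub_nonneg.2 ha2)]

theorem fredholm_determinant_product_general
    (β₁ β₂ a : ℝ) (ha : |a| ≤ 1) :
    let D := Real.sqrt ((β₁ ^ 2 - β₂ ^ 2) ^ 2 + 4 * a ^ 2 * β₁ ^ 2 * β₂ ^ 2)
    let cPlus := Real.sqrt (((β₁ ^ 2 + β₂ ^ 2) + D) / 2)
    let cMinus := Real.sqrt (((β₁ ^ 2 + β₂ ^ 2) - D) / 2)
    let lam : ℕ → ℝ := fun n => 1 / (Real.pi ^ 2 * ((n : ℝ) + 1) ^ 2)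
    let γPlus : ℕ → ℝ := fun n => lam n * ((-(β₁ ^ 2 + β₂ ^ 2) + D) / 2)
    let γMinus : ℕ → ℝ := fun n => lam n * ((-(β₁ ^ 2 + β₂ ^ 2) - D) / 2)
    Multipliable (fun n => (1 - γPlus n) * (1 - γMinus n)) ∧
      (∏' n, (1 - γPlus n) * (1 - γMinus n)) = sinhRatio cPlus * sinhRatio cMinus := by
  intro D cPlus cMinus lam γPlus γMinus
  have hD_nonneg : 0 ≤ D := Real.sqrt_nonneg _
  have hD_le : D ≤ β₁ ^ 2 + β₂ ^ 2 := sqrt_discriminant_le_sum_sq β₁ β₂ a ha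
  have hcPlus : cPlus ^ 2 = ((β₁ ^ 2 + β₂ ^ 2) + D) / 2 := Real.sq_sqrt (by positivity)
  have hcMinus : cMinus ^ 2 = ((β₁ ^ 2 + β₂ ^ 2) - D) / 2 := Real.sq_sqrt (by linarith)
  have hfactor : ∀ n : ℕ, (1 - γPlus n) * (1 - γMinus n) =
      (1 + cMinus ^ 2 / (π ^ 2 * ((n : ℝ) + 1) ^ 2)) *
        (1 + cPlus ^ 2 / (π ^ 2 * ((n : ℝ) + 1) ^ 2)) := by
    intro n
    rw [hcPlus, hcMinus]
    simp only [γPlus, γMinus, lam]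
    ring
  have hprod : HasProd (fun n => (1 - γPlus n) * (1 - γMinus n))
      (sinhRatio cMinus * sinhRatio cPlus) := by
    simpa only [hfactor] using
      (hasProd_one_add_sq_div_pi_sq_mul_sq cMinus).mul (hasProd_one_add_sq_div_pi_sq_mul_sq cPlus)
  exact ⟨hprod.multipliable, by rw [hprod.tprod_eq, mul_comm]⟩

theorem fredholm_determinant_product
    (β₁ β₂ a : ℝ) (h₁ : 0 ≤ β₁) (h₂ : 0 ≤ β₂) (ha : |a| ≤ 1) :
    let D := Real.sqrt ((β₁ ^ 2 - β₂ ^ 2) ^ 2 + 4 * a ^ 2 * β₁ ^ 2 * β₂ ^ 2)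
    let cPlus := Real.sqrt (((β₁ ^ 2 + β₂ ^ 2) + D) / 2)
    let cMinus := Real.sqrt (((β₁ ^ 2 + β₂ ^ 2) - D) / 2)
    let lam : ℕ → ℝ := fun n => 1 / (Real.pi ^ 2 * ((n : ℝ) + 1) ^ 2)
    let γPlus : ℕ → ℝ := fun n => lam n * ((-(β₁ ^ 2 + β₂ ^ 2) + D) / 2)
    let γMinus : ℕ → ℝ := fun n => lam n * ((-(β₁ ^ 2 + β₂ ^ 2) - D) / 2)
    Multipliable (fun n => (1 - γPlus n) * (1 - γMinus n)) ∧
      (∏' n, (1 - γPlus n) * (1 - γMinus n)) = sinhRatio cPlus * sinhRatio cMinus :=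
  fredholm_determinant_product_general β₁ β₂ a ha
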